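/- Let R be an excellent ring and let I and J be radical ideals of R such that the quotient ring R/(I ∩ J) is seminormal. Then the ideal I + J is radical. -/

import Mathlib

open IsLocalRing TensorProduct

universe u

section Defs

variable (R : Type u) [CommRing R]

/-- The embedding dimension of a Noetherian local ring: `dim_k (m/m²)`. -/
noncomputable def embDim [IsLocalRing R] : ℕ :=
  Module.finrank (ResidueField R) (CotangentSpace R)

/-- A Noetherian local ring is regular if its embedding dimension equals its Krull dimension. -/
def IsRegularLocal [IsLocalRing R] : Prop :=
  IsNoetherianRing R ∧ (embDim R : WithBot ℕ∞) = ringKrullDim R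

/-- A (not necessarily local) commutative ring is regular if it is Noetherian and all of its
localizations at primes are regular local rings. -/
def IsRegularRing' : Prop :=
  IsNoetherianRing R ∧ ∀ (p : Ideal R) (_ : p.IsPrime), IsRegularLocal (Localization.AtPrime p)

/-- An algebra `A` over a field `k` is geometrically regular if `L ⊗ₖ A` is a regular ring for
every finite field extension `L` of `k`. -/
def IsGeomRegularAlgebra (k : Type u) (A : Type u) [Field k] [CommRing A] [Algebra k A] : Prop :=
  ∀ (L : Type u) [Field L] [Algebra k L], Module.Finite k L → IsRegularRing' (L ⊗[k] A)

/-- A chain of primes is saturated if each step is a covering relation. -/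
def IsSaturatedChain {α : Type u} [Preorder α] (c : LTSeries α) : Prop :=
  ∀ i : Fin c.length, c.toFun i.castSucc ⋖ c.toFun i.succ

/-- A ring is catenary if any two saturated chains of primes with the same endpoints have the
same length. -/
def IsCatenary : Prop :=
  ∀ c₁ c₂ : LTSeries (PrimeSpectrum R), c₁.head = c₂.head → c₁.last = c₂.last →
    IsSaturatedChain c₁ → IsSaturatedChain c₂ → c₁.length = c₂.length

/-- A ring is universally catenary if every finite type algebra over it is catenary. -/
def IsUniversallyCatenary : Prop :=
  ∀ (S : Type u) [CommRing S] [Algebra R S], Algebra.FiniteType R S → IsCatenary S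

/-- The residue field of a ring at a prime ideal. -/
abbrev residueFieldAt (q : Ideal R) [q.IsPrime] : Type u :=
  ResidueField (Localization.AtPrime q)

/-- A ring is a G-ring if, for every prime `p`, the formal fibers of `R_p` (the fibers of the
map from `R_p` to its `maximal-adic` completion, over the primes `q ⊆ p` of `R`) are
geometrically regular over the residue fields `κ(q)`. -/
def IsGRing : Prop :=
  ∀ (p : Ideal R) (_ : p.IsPrime) (q : Ideal R) (_ : q.IsPrime), q ≤ p →
    letI Rp := Localization.AtPrime p
    letI Rphat := AdicCompletion (maximalIdeal Rp) Rp
    letI algRphat : Algebra R Rphat :=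
      ((algebraMap Rp Rphat).comp (algebraMap R Rp)).toAlgebra
    letI algK : Algebra R (residueFieldAt R q) :=
      ((algebraMap (Localization.AtPrime q) (residueFieldAt R q)).comp
        (algebraMap R (Localization.AtPrime q))).toAlgebra
    IsGeomRegularAlgebra (residueFieldAt R q)
      (@TensorProduct R _ (residueFieldAt R q) Rphat _ _ algK.toModule algRphat.toModule)

/-- A ring is J-2 if the regular locus of every finite type algebra over it is open. -/
def IsJ2 : Prop :=
  ∀ (S : Type u) [CommRing S] [Algebra R S], Algebra.FiniteType R S →
    IsOpen {p : PrimeSpectrum S | IsRegularLocal (Localization.AtPrime p.asIdeal)}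

/-- A ring is excellent if it is Noetherian, universally catenary, a G-ring, and J-2. -/
def IsExcellentRing : Prop :=
  IsNoetherianRing R ∧ IsUniversallyCatenary R ∧ IsGRing R ∧ IsJ2 R

/-- A proper ideal of a local ring is equidimensional if all of its minimal primes have the same
coheight. -/
def IsEquidimensionalIdeal (Q : Ideal R) : Prop :=
  ∀ P ∈ Q.minimalPrimes, ringKrullDim (R ⧸ P) = ringKrullDim (R ⧸ Q)

/-- A set of ideals of a local ring is a pseudo-prime system if each of its members is a proper
radical equidimensional ideal, and whenever some minimal prime of one member is contained in a
minimal prime of another, the first member is contained in the second. -/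
def IsPseudoPrimeSystem (𝒬 : Set (Ideal R)) : Prop :=
  (∀ Q ∈ 𝒬, Q ≠ ⊤ ∧ Q.IsRadical ∧ IsEquidimensionalIdeal R Q) ∧
    ∀ Q₁ ∈ 𝒬, ∀ Q₂ ∈ 𝒬,
      (∃ P₁ ∈ Q₁.minimalPrimes, ∃ P₂ ∈ Q₂.minimalPrimes, P₁ ≤ P₂) → Q₁ ≤ Q₂

/-- `e(R, 𝒬, d)`: the number of ideals in `𝒬` of coheight `d`. -/
noncomputable def sysCount (𝒬 : Set (Ideal R)) (d : ℕ) : ℕ :=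
  {Q ∈ 𝒬 | ringKrullDim (R ⧸ Q) = (d : WithBot ℕ∞)}.ncard

/-- The set of all intersections of finite nonempty subcollections of `𝒬`. -/
def finiteIntersections (𝒬 : Set (Ideal R)) : Set (Ideal R) :=
  {I | ∃ α : Finset (Ideal R), α.Nonempty ∧ ↑α ⊆ 𝒬 ∧ I = α.inf id}

/-- A pseudo-prime system `𝒬` is intersection compatible if the set of intersections of finite
nonempty subcollections of `𝒬` is closed under (finite) sums. -/
def IsIntersectionCompatible (𝒬 : Set (Ideal R)) : Prop :=
  ∀ I ∈ finiteIntersections R 𝒬, ∀ J ∈ finiteIntersections R 𝒬,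
    I + J ∈ finiteIntersections R 𝒬

end Defs

section Seminormality

open IsLocalRing in
/-- A ring map `f : A → B` is a subintegral extension if it is injective, `B` is reduced and
module-finite over `A`, `f` induces a bijection on prime spectra, and `f` induces isomorphisms
of residue fields at all primes. -/
def IsSubintegralExtension {A B : Type u} [CommRing A] [CommRing B] (f : A →+* B) : Prop :=
  Function.Injective f ∧ IsReduced B ∧
    (letI := f.toAlgebra; Module.Finite A B) ∧
    Function.Bijective (PrimeSpectrum.comap f) ∧
    ∀ (q : Ideal B) [q.IsPrime],
      haveI := Localization.isLocalHom_localRingHom (q.comap f) q f rfl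
      Function.Bijective (ResidueField.map (Localization.localRingHom (q.comap f) q f rfl))

/-- A reduced ring `A` is seminormal if every subintegral extension out of `A` is an
isomorphism. -/
def IsSeminormalRing (A : Type u) [CommRing A] : Prop :=
  IsReduced A ∧ ∀ (B : Type u) [CommRing B] (f : A →+* B),
    IsSubintegralExtension f → Function.Bijective f

end Seminormality

/-!
Put `A = R ⧸ (I ⊓ J)`, which embeds into the reduced ring `C = R ⧸ I × R ⧸ J`, and note that
`(x mod I, 0)` lies in `A` exactly when `x ∈ I + J`. If `x²` and `x³` lie in `I + J`, then
`c = (x mod I, 0)` has `c², c³ ∈ A`, and `A ⊆ A[c] = A + A c` is subintegral: membership of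
`u + v c` in a prime `q` is decided by `q ∩ A` (test `c` through `c²`, and otherwise multiply by
`c²`), and in the residue field `c` is `0` or `c³ / c²`. Seminormality forces `c ∈ A`, so
`x ∈ I + J`. An ideal containing every `x` with `x², x³` in it is radical, since `x ^ (n + 2)` in
it puts both `(x ^ (n + 1))²` and `(x ^ (n + 1))³` in it.
-/

section SquareCubeExtension

variable {A B : Type*} [CommRing A] [CommRing B] {f : A →+* B} {b : B} {a₂ a₃ : A}

theorem RingHom.finite_of_forall_eq_add_mul (hspan : ∀ s : B, ∃ u v : A, s = f u + f v * b) :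
    f.Finite := by
  classical
  algebraize [f]
  refine ⟨⟨{1, b}, eq_top_iff.mpr fun s _ => ?_⟩⟩
  obtain ⟨u, v, rfl⟩ := hspan s
  rw [Finset.coe_pair, Submodule.mem_span_pair]
  exact ⟨u, v, by simp [Algebra.smul_def, RingHom.algebraMap_toAlgebra]⟩

theorem Ideal.le_of_comap_eq_comap_of_sq_of_cube (hb₂ : b ^ 2 = f a₂) (hb₃ : b ^ 3 = f a₃)
    (hspan : ∀ s : B, ∃ u v : A, s = f u + f v * b) {q₁ q₂ : Ideal B} [hq₁ : q₁.IsPrime]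
    [hq₂ : q₂.IsPrime] (h : q₁.comap f = q₂.comap f) : q₁ ≤ q₂ := by
  have hf (a : A) : f a ∈ q₁ ↔ f a ∈ q₂ := SetLike.ext_iff.mp h a
  have hb : b ∈ q₁ ↔ b ∈ q₂ := by
    rw [← hq₁.pow_mem_iff_mem 2 two_pos, ← hq₂.pow_mem_iff_mem 2 two_pos, hb₂]
    exact hf a₂
  intro s hs
  obtain ⟨u, v, rfl⟩ := hspan s
  by_cases hb₁ : b ∈ q₁
  · have hu : f u ∈ q₁ := by simpa using q₁.sub_mem hs (q₁.mul_mem_left (f v) hb₁)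
    exact q₂.add_mem ((hf u).mp hu) (q₂.mul_mem_left _ (hb.mp hb₁))
  · have hmul : (f u + f v * b) * b ^ 2 = f (u * a₂ + v * a₃) := by
      rw [map_add, map_mul, map_mul, ← hb₂, ← hb₃]
      ring
    have hmem : (f u + f v * b) * b ^ 2 ∈ q₂ :=
      hmul ▸ (hf _).mp (hmul ▸ q₁.mul_mem_right _ hs)
    exact (hq₂.mem_or_mem hmem).resolve_right
      fun h₂ => hb₁ (hb.mpr (hq₂.mem_of_pow_mem 2 h₂))

theorem Ideal.ResidueField.map_surjective_of_forall_mem_fieldRange (q : Ideal B) [q.IsPrime]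
    (h : ∀ s : B,
      algebraMap B q.ResidueField s ∈ (Ideal.ResidueField.map (q.comap f) q f rfl).fieldRange) :
    Function.Surjective (Ideal.ResidueField.map (q.comap f) q f rfl) := by
  intro z
  obtain ⟨x, y, -, rfl⟩ := IsFractionRing.div_surjective (B ⧸ q) z
  obtain ⟨s, rfl⟩ := Ideal.Quotient.mk_surjective x
  obtain ⟨t, rfl⟩ := Ideal.Quotient.mk_surjective y
  simp only [← Ideal.Quotient.algebraMap_eq, ← IsScalarTower.algebraMap_apply]
  exact (Ideal.ResidueField.map (q.comap f) q f rfl).fieldRange.div_mem (h s) (h t)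

theorem Ideal.ResidueField.algebraMap_mem_fieldRange_of_sq_of_cube (hb₂ : b ^ 2 = f a₂)
    (hb₃ : b ^ 3 = f a₃) (hspan : ∀ s : B, ∃ u v : A, s = f u + f v * b) (q : Ideal B)
    [q.IsPrime] (s : B) :
    algebraMap B q.ResidueField s ∈ (Ideal.ResidueField.map (q.comap f) q f rfl).fieldRange := by
  set F := (Ideal.ResidueField.map (q.comap f) q f rfl).fieldRange
  set ψ := algebraMap B q.ResidueField
  have hA (a : A) : ψ (f a) ∈ F := ⟨algebraMap A _ a, Ideal.ResidueField.map_algebraMap _ _ _ _ a⟩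
  have hb : ψ b ∈ F := by
    by_cases h₀ : ψ (f a₂) = 0
    · have : ψ b = 0 := pow_eq_zero_iff two_ne_zero |>.mp (by rw [← map_pow, hb₂, h₀])
      exact this ▸ F.zero_mem
    · have : ψ b = ψ (f a₃) / ψ (f a₂) := by
        rw [eq_div_iff h₀, ← map_mul, ← hb₂, ← hb₃]
        ring_nf
      exact this ▸ F.div_mem (hA a₃) (hA a₂)
  obtain ⟨u, v, rfl⟩ := hspan s
  simpa only [map_add, map_mul] using F.add_mem (hA u) (F.mul_mem (hA v) hb)

end SquareCubeExtension

theorem isSubintegralExtension_of_sq_of_cube {A B : Type u} [CommRing A] [CommRing B]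
    [IsReduced B] {f : A →+* B} {b : B} {a₂ a₃ : A} (hf : Function.Injective f)
    (hb₂ : b ^ 2 = f a₂) (hb₃ : b ^ 3 = f a₃) (hspan : ∀ s : B, ∃ u v : A, s = f u + f v * b) :
    IsSubintegralExtension f := by
  have hfin : f.Finite := RingHom.finite_of_forall_eq_add_mul hspan
  refine ⟨hf, ‹_›, hfin, ⟨fun q₁ q₂ h => ?_, hfin.to_isIntegral.comap_surjective hf⟩,
    fun q _ => ⟨RingHom.injective _, ?_⟩⟩
  · have h' := congrArg PrimeSpectrum.asIdeal h
    exact PrimeSpectrum.ext <| le_antisymm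
      (Ideal.le_of_comap_eq_comap_of_sq_of_cube hb₂ hb₃ hspan h')
      (Ideal.le_of_comap_eq_comap_of_sq_of_cube hb₂ hb₃ hspan h'.symm)
  · exact Ideal.ResidueField.map_surjective_of_forall_mem_fieldRange q
      (Ideal.ResidueField.algebraMap_mem_fieldRange_of_sq_of_cube hb₂ hb₃ hspan q)

theorem Algebra.exists_eq_add_mul_of_mem_adjoin {A C : Type*} [CommRing A] [CommRing C]
    [Algebra A C] {c : C} {a : A} (hc : c ^ 2 = algebraMap A C a) {s : C}
    (hs : s ∈ Algebra.adjoin A {c}) :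
    ∃ u v : A, s = algebraMap A C u + algebraMap A C v * c := by
  induction hs using Algebra.adjoin_induction with
  | mem y hy =>
    rw [Set.mem_singleton_iff.mp hy]
    exact ⟨0, 1, by simp⟩
  | algebraMap r => exact ⟨r, 0, by simp⟩
  | add _ _ _ _ ih₁ ih₂ =>
    obtain ⟨u₁, v₁, rfl⟩ := ih₁
    obtain ⟨u₂, v₂, rfl⟩ := ih₂
    exact ⟨u₁ + u₂, v₁ + v₂, by simp only [map_add]; ring⟩
  | mul _ _ _ _ ih₁ ih₂ =>
    obtain ⟨u₁, v₁, rfl⟩ := ih₁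
    obtain ⟨u₂, v₂, rfl⟩ := ih₂
    refine ⟨u₁ * u₂ + v₁ * v₂ * a, u₁ * v₂ + v₁ * u₂, ?_⟩
    simp only [map_add, map_mul, ← hc]
    ring

theorem IsSeminormalRing.mem_range_of_sq_mem_of_cube_mem {A C : Type u} [CommRing A]
    [CommRing C] [IsReduced C] (hA : IsSeminormalRing A) {g : A →+* C}
    (hg : Function.Injective g) {c : C} (h₂ : c ^ 2 ∈ g.range) (h₃ : c ^ 3 ∈ g.range) :
    c ∈ g.range := by
  algebraize [g]
  obtain ⟨a₂, ha₂⟩ := h₂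
  obtain ⟨a₃, ha₃⟩ := h₃
  let S := Algebra.adjoin A {c}
  let c' : S := ⟨c, Algebra.self_mem_adjoin_singleton A c⟩
  have : IsReduced S := isReduced_of_injective S.val Subtype.val_injective
  have hsub : IsSubintegralExtension (algebraMap A S) :=
    isSubintegralExtension_of_sq_of_cube (b := c') (a₂ := a₂) (a₃ := a₃)
      (fun _ _ h => hg (congrArg Subtype.val h)) (Subtype.ext ha₂.symm) (Subtype.ext ha₃.symm)
      fun s => (Algebra.exists_eq_add_mul_of_mem_adjoin ha₂.symm s.2).imp
        fun _ => Exists.imp fun _ => Subtype.ext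
  obtain ⟨a, ha⟩ := (hA.2 S _ hsub).2 c'
  exact ⟨a, congrArg Subtype.val ha⟩

namespace Ideal

variable {R : Type*} [CommRing R] (I J : Ideal R)

def quotientInfToProd : R ⧸ (I ⊓ J) →+* (R ⧸ I) × (R ⧸ J) :=
  Quotient.lift (I ⊓ J) ((Quotient.mk I).prod (Quotient.mk J)) fun _ hr =>
    Prod.ext (Quotient.eq_zero_iff_mem.mpr hr.1) (Quotient.eq_zero_iff_mem.mpr hr.2)

@[simp]
theorem quotientInfToProd_mk (r : R) :
    quotientInfToProd I J (Quotient.mk _ r) = (Quotient.mk I r, Quotient.mk J r) :=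
  rfl

theorem quotientInfToProd_injective : Function.Injective (quotientInfToProd I J) := by
  rw [quotientInfToProd, injective_lift_iff]
  ext r
  simp [Prod.ext_iff, Quotient.eq_zero_iff_mem]

theorem mk_zero_mem_range_quotientInfToProd_iff {x : R} :
    ((Quotient.mk I x, 0) : (R ⧸ I) × (R ⧸ J)) ∈ (quotientInfToProd I J).range ↔ x ∈ I + J := by
  rw [add_eq_sup, Submodule.mem_sup]
  constructor
  · rintro ⟨a, ha⟩
    obtain ⟨r, rfl⟩ := Quotient.mk_surjective a
    simp only [quotientInfToProd_mk, Prod.ext_iff, Quotient.eq, Quotient.eq_zero_iff_mem] at ha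
    exact ⟨x - r, by simpa using I.neg_mem ha.1, r, ha.2, sub_add_cancel x r⟩
  · rintro ⟨i, hi, j, hj, rfl⟩
    refine ⟨Quotient.mk _ j, ?_⟩
    simp [Prod.ext_iff, Quotient.eq_zero_iff_mem, hi, hj]

theorem isRadical_of_sq_mem_of_cube_mem {K : Ideal R}
    (h : ∀ x : R, x ^ 2 ∈ K → x ^ 3 ∈ K → x ∈ K) : K.IsRadical := by
  have hsucc (n : ℕ) : ∀ x : R, x ^ (n + 1) ∈ K → x ∈ K := by
    induction n with
    | zero => simp
    | succ n ih =>
      intro x hx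
      refine ih x (h _ ?_ ?_) <;> rw [← pow_mul] <;> exact K.pow_mem_of_pow_mem hx (by omega)
  rintro x ⟨_ | n, hn⟩
  · rw [K.eq_top_of_isUnit_mem hn (by simp)]
    exact Submodule.mem_top
  · exact hsucc n x hn

end Ideal

theorem Ideal.mem_add_of_sq_mem_of_cube_mem {R : Type u} [CommRing R] {I J : Ideal R}
    (hI : I.IsRadical) (hJ : J.IsRadical) (hsn : IsSeminormalRing (R ⧸ (I ⊓ J))) {x : R}
    (h₂ : x ^ 2 ∈ I + J) (h₃ : x ^ 3 ∈ I + J) : x ∈ I + J := by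
  have : IsReduced (R ⧸ I) := (isRadical_iff_quotient_reduced I).mp hI
  have : IsReduced (R ⧸ J) := (isRadical_iff_quotient_reduced J).mp hJ
  rw [← mk_zero_mem_range_quotientInfToProd_iff] at h₂ h₃ ⊢
  exact hsn.mem_range_of_sq_mem_of_cube_mem (quotientInfToProd_injective I J)
    (by simpa using h₂) (by simpa using h₃)

theorem isRadical_add_of_isSeminormalRing_quotient_inf_general (R : Type u) [CommRing R]
    (I J : Ideal R) (hI : I.IsRadical) (hJ : J.IsRadical)
    (hsn : IsSeminormalRing (R ⧸ (I ⊓ J))) : (I + J).IsRadical :=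
  Ideal.isRadical_of_sq_mem_of_cube_mem fun _ => Ideal.mem_add_of_sq_mem_of_cube_mem hI hJ hsn

/-- If `I` and `J` are radical ideals of an excellent ring `R` such that `R ⧸ (I ⊓ J)` is
seminormal, then `I + J` is a radical ideal. -/
theorem isRadical_add_of_isSeminormalRing_quotient_inf (R : Type u) [CommRing R]
    (hexc : IsExcellentRing R) (I J : Ideal R) (hI : I.IsRadical) (hJ : J.IsRadical)
    (hsn : IsSeminormalRing (R ⧸ (I ⊓ J))) : (I + J).IsRadical :=
  isRadical_add_of_isSeminormalRing_quotient_inf_general R I J hI hJ hsn
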